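/- Let x ∈ ℝⁿ with card(x) = k, and suppose that x̃_i ∉ (0, √g_i) for every i. Then a nonincreasing nonnegative vector z̃ ∈ ℝⁿ attains the supremum in the representation f**(x) = sup { 2⟨x̃, z̃⟩ − Σ_{i=1}^n max(z̃_i² − g_i, 0) : z̃ nonincreasing, nonnegative } if and only if z̃_i = x̃_i for all i ≤ k and z̃_i ∈ [0, min(x̃_k, √g_{k+1})] for all i > k (with the conventions x̃_0 = +∞ when k = 0 and √g_{n+1} = +∞ when k = n; summands with g_i = +∞ are interpreted as 0). -/

import Mathlib

open scoped RealInnerProductSpace ENNReal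
noncomputable section

/-- `ℝⁿ` with the Euclidean inner product and norm. -/
abbrev Evec (n : ℕ) := EuclideanSpace ℝ (Fin n)

/-- The number of nonzero entries of a vector. -/
def spcard {n : ℕ} (x : Evec n) : ℕ := (Finset.univ.filter (fun i => x i ≠ 0)).card

/-- The absolute values of the entries of `x` sorted in nonincreasing order,
as a `1`-based function on `ℕ` (with value `0` outside `{1,…,n}`, so the
convention `x̃_{n+1} = 0` is built in). -/
def sortedAbs {n : ℕ} (x : Evec n) : ℕ → ℝ :=
  fun j => if h : 1 ≤ j ∧ j ≤ n then
    |x ((Tuple.sort (fun i : Fin n => -|x i|)) ⟨j - 1, by omega⟩)| else 0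

/-- `G(k) = ∑_{i=1}^k g_i`. -/
def Gsum (g : ℕ → ℝ≥0∞) (k : ℕ) : ℝ≥0∞ := ∑ i ∈ Finset.Icc 1 k, g i

/-- `f(x) = G(card x) + ‖x‖²`, valued in `EReal`. -/
def fobj {n : ℕ} (g : ℕ → ℝ≥0∞) (x : Evec n) : EReal :=
  ((Gsum g (spcard x) : ℝ≥0∞) : EReal) + ((‖x‖ ^ 2 : ℝ) : EReal)

/-- The convex conjugate `f*` of `f`. -/
def fconj {n : ℕ} (g : ℕ → ℝ≥0∞) (y : Evec n) : EReal :=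
  ⨆ x : Evec n, ((⟪x, y⟫ : ℝ) : EReal) - fobj g x

/-- The biconjugate (convex envelope) `f**` of `f`. -/
def fbiconj {n : ℕ} (g : ℕ → ℝ≥0∞) (x : Evec n) : EReal :=
  ⨆ y : Evec n, ((⟪x, y⟫ : ℝ) : EReal) - fconj g y

/-- `v` is a subgradient of `f**` at `x`. -/
def IsSubgrad {n : ℕ} (g : ℕ → ℝ≥0∞) (v x : Evec n) : Prop :=
  ∀ w : Evec n, fbiconj g x + ((⟪v, w - x⟫ : ℝ) : EReal) ≤ fbiconj g w

/-- `z = (I − AᵀA)x + Aᵀb`. -/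
def zvec {n m : ℕ} (A : Evec n →L[ℝ] Evec m) (b : Evec m) (x : Evec n) : Evec n :=
  x - ContinuousLinearMap.adjoint A (A x) + ContinuousLinearMap.adjoint A b

/-- `x` is a stationary point of the relaxation `R_g(·) + ‖A·−b‖²`:
`2z` is a subgradient of `f**` at `x`, where `z = (I − AᵀA)x + Aᵀb`. -/
def IsStationaryPt {n m : ℕ} (g : ℕ → ℝ≥0∞) (A : Evec n →L[ℝ] Evec m) (b : Evec m)
    (x : Evec n) : Prop :=
  IsSubgrad g ((2 : ℝ) • zvec A b x) x

/-- `A` satisfies the RIP of order `r` with constant `δ`. -/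
def RIP {n m : ℕ} (A : Evec n →L[ℝ] Evec m) (r : ℕ) (δ : ℝ) : Prop :=
  ∀ w : Evec n, spcard w ≤ r →
    (1 - δ) * ‖w‖ ^ 2 ≤ ‖A w‖ ^ 2 ∧ ‖A w‖ ^ 2 ≤ (1 + δ) * ‖w‖ ^ 2

/-- Square root on `[0,∞]`, with `√(+∞) = +∞`. -/
def sqrtE (a : ℝ≥0∞) : ℝ≥0∞ := a ^ (1 / 2 : ℝ)

/-- The relaxed objective `R_g(x) + ‖Ax − b‖²`, where `R_g(x) = f**(x) − ‖x‖²`. -/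
def relaxObj {n m : ℕ} (g : ℕ → ℝ≥0∞) (A : Evec n →L[ℝ] Evec m) (b : Evec m)
    (x : Evec n) : EReal :=
  (fbiconj g x - ((‖x‖ ^ 2 : ℝ) : EReal)) + ((‖A x - b‖ ^ 2 : ℝ) : EReal)

/-- The original (unrelaxed) objective `G(card(x)) + ‖Ax − b‖²`. -/
def origObj {n m : ℕ} (g : ℕ → ℝ≥0∞) (A : Evec n →L[ℝ] Evec m) (b : Evec m)
    (x : Evec n) : EReal :=
  ((Gsum g (spcard x) : ℝ≥0∞) : EReal) + ((‖A x - b‖ ^ 2 : ℝ) : EReal)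

/-- `x` is a local minimizer of `F`. -/
def IsLocalMinimizer {n : ℕ} (F : Evec n → EReal) (x : Evec n) : Prop :=
  ∃ U ∈ nhds x, ∀ w ∈ U, F x ≤ F w

/-!
Under the hypothesis on `x` the convex envelope is exact at `x`: `f**(x) = f(x) = G(k) + ‖x‖²`.
Since `f** ≤ f`, it suffices to test `f**` against `y = 2x`, which reduces to
`G(k) ≤ G(card w) + ‖w - x‖²` for every `w`. If `w` has `j < k` nonzero entries, it vanishes on at
least `k - j` of the `k` largest entries of `x`, each of which costs at least `x̃_k² ≥ g_k ≥ g_i`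
for `j < i ≤ k`.

Writing `f(x) = ∑ᵢ (x̃ᵢ² + [i ≤ k] gᵢ)`, the objective at `z̃` is bounded summand by summand:
for `i ≤ k`, `2 x̃ᵢ z̃ᵢ - max (z̃ᵢ² - gᵢ, 0) ≤ x̃ᵢ² + gᵢ` with equality iff `z̃ᵢ = x̃ᵢ` (because
the hypothesis on `x` gives `gᵢ ≤ x̃ᵢ²`), and for `i > k`, where `x̃ᵢ = 0`, the summand
`-max (z̃ᵢ² - gᵢ, 0)` vanishes iff `z̃ᵢ ≤ √gᵢ`. Monotonicity of `z̃` and of `g` turns these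
termwise conditions into the stated ones.
-/

open Finset

lemma sqrtE_top : sqrtE ⊤ = ⊤ := ENNReal.top_rpow_of_pos (by norm_num)

lemma sqrtE_mono : Monotone sqrtE := fun _ _ h => ENNReal.rpow_le_rpow h (by norm_num)

lemma ofReal_le_sqrtE_iff {a : ℝ≥0∞} {t : ℝ} (ht : 0 ≤ t) :
    ENNReal.ofReal t ≤ sqrtE a ↔ ENNReal.ofReal (t ^ 2) ≤ a := by
  rw [sqrtE, ← ENNReal.rpow_le_rpow_iff (show (0 : ℝ) < 2 by norm_num), ← ENNReal.rpow_mul,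
    ENNReal.ofReal_rpow_of_nonneg ht (by norm_num)]
  norm_num

lemma sqrtE_le_ofReal_iff {a : ℝ≥0∞} {t : ℝ} (ht : 0 ≤ t) :
    sqrtE a ≤ ENNReal.ofReal t ↔ a ≤ ENNReal.ofReal (t ^ 2) := by
  rw [sqrtE, ← ENNReal.rpow_le_rpow_iff (show (0 : ℝ) < 2 by norm_num), ← ENNReal.rpow_mul,
    ENNReal.ofReal_rpow_of_nonneg ht (by norm_num)]
  norm_num

lemma Fin.mem_iff_lt_card_of_isLowerSet {n : ℕ} {s : Finset (Fin n)}
    (hs : IsLowerSet (s : Set (Fin n))) (a : Fin n) : a ∈ s ↔ (a : ℕ) < #s := by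
  constructor
  · intro ha
    have := card_le_card fun b hb => hs (mem_Iic.1 hb) ha
    rw [Fin.card_Iic] at this
    omega
  · intro h
    by_contra ha
    have := card_le_card fun b hb => mem_Iio.2 (lt_of_not_ge fun hab => ha (hs hab hb))
    rw [Fin.card_Iio] at this
    omega

section SortedAbs

variable {n : ℕ} (x : Evec n)

abbrev absSortPerm : Equiv.Perm (Fin n) := Tuple.sort fun i => -|x i|

lemma sortedAbs_succ (i : Fin n) : sortedAbs x (i + 1) = |x (absSortPerm x i)| := by
  simp [sortedAbs]

lemma sortedAbs_nonneg (j : ℕ) : 0 ≤ sortedAbs x j := by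
  unfold sortedAbs
  split <;> simp

lemma sortedAbs_eq_zero_of_lt {j : ℕ} (hj : n < j) : sortedAbs x j = 0 := by
  simp [sortedAbs]
  omega

lemma sortedAbs_antitoneOn : AntitoneOn (sortedAbs x) (Set.Ici 1) := by
  intro i hi j hj hij
  rcases le_or_gt j n with hjn | hjn
  · obtain ⟨i', rfl⟩ : ∃ i' : Fin n, i = i' + 1 := ⟨⟨i - 1, by grind⟩, by grind⟩
    obtain ⟨j', rfl⟩ : ∃ j' : Fin n, j = j' + 1 := ⟨⟨j - 1, by grind⟩, by grind⟩
    simpa [sortedAbs_succ] using Tuple.monotone_sort (fun k : Fin n => -|x k|)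
      (Fin.le_def.2 (by omega) : i' ≤ j')
  · rw [sortedAbs_eq_zero_of_lt x hjn]
    exact sortedAbs_nonneg x i

lemma norm_sq_eq_sum (v : Evec n) : ‖v‖ ^ 2 = ∑ i, v i ^ 2 := by
  simp [EuclideanSpace.norm_sq_eq]

lemma sum_sortedAbs_sq : ∑ i : Fin n, sortedAbs x (i + 1) ^ 2 = ‖x‖ ^ 2 := by
  simp only [sortedAbs_succ, sq_abs, norm_sq_eq_sum]
  exact Equiv.sum_comp (absSortPerm x) fun i => x i ^ 2

lemma spcard_le : spcard x ≤ n :=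
  (card_filter_le _ _).trans_eq (card_fin n)

lemma card_sortedAbs_ne_zero : #{i : Fin n | sortedAbs x (i + 1) ≠ 0} = spcard x := by
  unfold spcard
  refine card_equiv (absSortPerm x) fun i => ?_
  simp [sortedAbs_succ]

lemma sortedAbs_pos_iff {j : ℕ} : 0 < sortedAbs x j ↔ 1 ≤ j ∧ j ≤ spcard x := by
  rcases lt_or_ge n j with hjn | hjn
  · have := spcard_le x
    simp only [sortedAbs_eq_zero_of_lt x hjn, lt_self_iff_false, false_iff]
    omega
  rcases Nat.eq_zero_or_pos j with rfl | hj1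
  · simp [sortedAbs]
  obtain ⟨i, rfl⟩ : ∃ i : Fin n, j = i + 1 := ⟨⟨j - 1, by omega⟩, by simp; omega⟩
  have hlower : IsLowerSet (({i : Fin n | sortedAbs x (i + 1) ≠ 0} : Finset _) : Set (Fin n)) := by
    intro a b hba ha
    simp only [coe_filter, mem_univ, true_and] at ha ⊢
    have := sortedAbs_antitoneOn x (by simp) (by simp) (by simpa using hba : (b : ℕ) + 1 ≤ a + 1)
    exact (((sortedAbs_nonneg x _).lt_of_ne' ha).trans_le this).ne'
  have := (Fin.mem_iff_lt_card_of_isLowerSet hlower i).trans (by rw [card_sortedAbs_ne_zero])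
  simp only [mem_filter, mem_univ, true_and] at this
  rw [(sortedAbs_nonneg x _).lt_iff_ne', this]
  omega

lemma sortedAbs_eq_zero_of_spcard_lt {j : ℕ} (hj : spcard x < j) : sortedAbs x j = 0 :=
  (sortedAbs_nonneg x j).antisymm' (not_lt.1 fun h => by have := (sortedAbs_pos_iff x).1 h; omega)

end SortedAbs

lemma Gsum_mono (g : ℕ → ℝ≥0∞) : Monotone (Gsum g) := fun _ _ h =>
  sum_le_sum_of_subset (Icc_subset_Icc_right h)

lemma Gsum_add_sum_Ioc (g : ℕ → ℝ≥0∞) {j k : ℕ} (h : j ≤ k) :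
    Gsum g j + ∑ i ∈ Ioc j k, g i = Gsum g k := by
  have hIcc (m : ℕ) : Icc 1 m = Ioc 0 m := Icc_add_one_left_eq_Ioc 0 m
  rw [Gsum, Gsum, hIcc, hIcc]
  exact sum_Ioc_consecutive g j.zero_le h

lemma Gsum_eq_sum_fin (g : ℕ → ℝ≥0∞) {n k : ℕ} (hk : k ≤ n) :
    Gsum g k = ∑ i : Fin n, if (i : ℕ) < k then g (i + 1) else 0 := by
  have hrange : {i ∈ range n | i < k} = range k := by
    ext i
    simp only [mem_filter, mem_range]
    omega
  rw [Fin.sum_univ_eq_sum_range (fun i => if i < k then g (i + 1) else 0), ← sum_filter, hrange,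
    range_eq_Ico, sum_Ico_add', Gsum, Ico_add_one_right_eq_Icc, zero_add]

/-- The summand `max (t² − γ, 0)` of the representation of `f**`, read as `0` when `γ = ∞`. -/
def penalty (γ : ℝ≥0∞) (t : ℝ) : ℝ := if γ = ⊤ then 0 else max (t ^ 2 - γ.toReal) 0

lemma penalty_nonneg (γ : ℝ≥0∞) (t : ℝ) : 0 ≤ penalty γ t := by
  unfold penalty
  split_ifs <;> simp

lemma penalty_eq_zero_iff {γ : ℝ≥0∞} {t : ℝ} (ht : 0 ≤ t) :
    penalty γ t = 0 ↔ ENNReal.ofReal t ≤ sqrtE γ := by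
  rcases eq_or_ne γ ⊤ with rfl | hγ
  · simp [penalty, sqrtE_top]
  rw [penalty, if_neg hγ, max_eq_right_iff, sub_nonpos, ofReal_le_sqrtE_iff ht,
    ENNReal.ofReal_le_iff_le_toReal hγ]

section Penalty

variable {s t : ℝ} {γ : ℝ≥0∞} (hγ : γ ≤ ENNReal.ofReal (s ^ 2))
include hγ

lemma two_mul_sub_penalty_le : 2 * (s * t) - penalty γ t ≤ s ^ 2 + γ.toReal := by
  rw [penalty, if_neg (ne_top_of_le_ne_top ENNReal.ofReal_ne_top hγ)]
  nlinarith [le_max_left (t ^ 2 - γ.toReal) 0, sq_nonneg (s - t)]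

lemma two_mul_sub_penalty_eq_iff : 2 * (s * t) - penalty γ t = s ^ 2 + γ.toReal ↔ t = s := by
  have hγs : γ.toReal ≤ s ^ 2 := ENNReal.toReal_le_of_le_ofReal (sq_nonneg s) hγ
  rw [penalty, if_neg (ne_top_of_le_ne_top ENNReal.ofReal_ne_top hγ)]
  constructor
  · intro h
    have hst : (s - t) ^ 2 = 0 :=
      le_antisymm (by nlinarith [le_max_left (t ^ 2 - γ.toReal) 0]) (sq_nonneg _)
    linarith [pow_eq_zero_iff two_ne_zero |>.1 hst]
  · rintro rfl
    rw [max_eq_left (by linarith)]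
    ring

end Penalty

lemma maximizer_conditions_iff {n k : ℕ} (hk : k ≤ n) {z : Fin n → ℝ} (hz : Antitone z)
    {g : ℕ → ℝ≥0∞} (hg : Monotone g) (s : ℕ → ℝ) :
    (∀ i : Fin n, if (i : ℕ) < k then z i = s (i + 1)
      else ENNReal.ofReal (z i) ≤ sqrtE (g (i + 1))) ↔
    ((∀ i : Fin n, (i : ℕ) + 1 ≤ k → z i = s (i + 1)) ∧
      ∀ i : Fin n, k < (i : ℕ) + 1 → ENNReal.ofReal (z i) ≤
        min (if k = 0 then ⊤ else ENNReal.ofReal (s k))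
          (if k = n then ⊤ else sqrtE (g (k + 1)))) := by
  constructor
  · intro h
    have head (i : Fin n) (hi : (i : ℕ) + 1 ≤ k) : z i = s (i + 1) := by
      simpa [show (i : ℕ) < k by omega] using h i
    refine ⟨head, fun i hi => le_min ?_ ?_⟩
    · split_ifs with hk0
      · exact le_top
      have hlast := head ⟨k - 1, by omega⟩ (by simp; omega)
      simp only [show k - 1 + 1 = k by omega] at hlast
      exact ENNReal.ofReal_le_ofReal (hlast ▸ hz (Fin.le_def.2 (by simp; omega)))
    · split_ifs with hkn
      · exact le_top
      have hnext := h ⟨k, by omega⟩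
      rw [if_neg (by simp)] at hnext
      exact (ENNReal.ofReal_le_ofReal (hz (Fin.le_def.2 (by simp; omega)))).trans hnext
  · rintro ⟨head, tail⟩ i
    split_ifs with hi
    · exact head i hi
    · have hkn : k ≠ n := by omega
      refine ((tail i (by omega)).trans (min_le_right _ _)).trans ?_
      rw [if_neg hkn]
      exact sqrtE_mono (hg (by omega))

variable {n : ℕ}

lemma card_sub_spcard_mul_sq_le (w x : Evec n) (S : Finset (Fin n)) {c : ℝ} (hc0 : 0 ≤ c)
    (hc : ∀ i ∈ S, c ≤ |x i|) : ((#S - spcard w : ℕ) : ℝ) * c ^ 2 ≤ ‖w - x‖ ^ 2 := by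
  set T := S \ ({i | w i ≠ 0} : Finset (Fin n))
  have hT : #S - spcard w ≤ #T := le_card_sdiff _ _
  calc ((#S - spcard w : ℕ) : ℝ) * c ^ 2 ≤ #T * c ^ 2 := by gcongr
    _ = ∑ i ∈ T, c ^ 2 := by rw [sum_const, nsmul_eq_mul]
    _ ≤ ∑ i ∈ T, (w i - x i) ^ 2 := by
        refine sum_le_sum fun i hi => ?_
        simp only [T, mem_sdiff, mem_filter, mem_univ, true_and, not_not] at hi
        rw [hi.2, zero_sub, neg_sq, ← sq_abs (x i)]
        exact pow_le_pow_left₀ hc0 (hc i hi.1) 2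
    _ ≤ ∑ i, (w i - x i) ^ 2 :=
        sum_le_sum_of_subset_of_nonneg (subset_univ T) fun _ _ _ => sq_nonneg _
    _ = ‖w - x‖ ^ 2 := by simp [norm_sq_eq_sum]

lemma sub_spcard_mul_sortedAbs_sq_le (w x : Evec n) (k : ℕ) :
    ((k - spcard w : ℕ) : ℝ) * sortedAbs x k ^ 2 ≤ ‖w - x‖ ^ 2 := by
  rcases le_or_gt k n with hkn | hkn
  · let S := univ.map ((Fin.castLEEmb hkn).trans (absSortPerm x).toEmbedding)
    have hS : #S = k := by simp [S]
    have hc : ∀ i ∈ S, sortedAbs x k ≤ |x i| := by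
      intro i hi
      obtain ⟨a, -, rfl⟩ := mem_map.1 hi
      have : sortedAbs x k ≤ sortedAbs x (a + 1) :=
        sortedAbs_antitoneOn x (by simp) (Set.mem_Ici.2 a.pos) (by simp)
      rw [Function.Embedding.trans_apply, Equiv.coe_toEmbedding, ← sortedAbs_succ]
      simpa using this
    simpa only [hS] using card_sub_spcard_mul_sq_le w x S (sortedAbs_nonneg x k) hc
  · simp [sortedAbs_eq_zero_of_lt x hkn]

lemma fobj_eq_coe (g : ℕ → ℝ≥0∞) {v : Evec n} (h : Gsum g (spcard v) ≠ ⊤) :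
    fobj g v = (((Gsum g (spcard v)).toReal + ‖v‖ ^ 2 : ℝ) : EReal) := by
  rw [fobj, EReal.coe_add, EReal.coe_ennreal_toReal h]

lemma fbiconj_le_fobj (g : ℕ → ℝ≥0∞) (x : Evec n) : fbiconj g x ≤ fobj g x := by
  refine iSup_le fun y => ?_
  rcases eq_or_ne (fobj g x) ⊤ with h | h
  · exact h ▸ le_top
  have hfx : fobj g x ≠ ⊥ := EReal.add_ne_bot_iff.2 ⟨EReal.coe_ennreal_ne_bot _, EReal.coe_ne_bot _⟩
  have hxy : ((⟪x, y⟫ : ℝ) : EReal) - fobj g x ≤ fconj g y :=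
    le_iSup (fun w : Evec n => ((⟪w, y⟫ : ℝ) : EReal) - fobj g w) x
  rw [EReal.sub_le_iff_le_add (.inl hfx) (.inl h)] at hxy
  exact EReal.sub_le_of_le_add' hxy

section NoSmallEntries

variable {g : ℕ → ℝ≥0∞} {x : Evec n}
  (hx : ∀ i, ¬(0 < sortedAbs x i ∧ ENNReal.ofReal (sortedAbs x i) < sqrtE (g i)))
include hx

lemma le_ofReal_sortedAbs_sq {i : ℕ} (hi1 : 1 ≤ i) (hik : i ≤ spcard x) :
    g i ≤ ENNReal.ofReal (sortedAbs x i ^ 2) := by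
  have hpos := (sortedAbs_pos_iff x).2 ⟨hi1, hik⟩
  exact (sqrtE_le_ofReal_iff hpos.le).1 (not_lt.1 fun h => hx i ⟨hpos, h⟩)

lemma Gsum_spcard_ne_top : Gsum g (spcard x) ≠ ⊤ :=
  ENNReal.sum_ne_top.2 fun _ hi => ne_top_of_le_ne_top ENNReal.ofReal_ne_top
    (le_ofReal_sortedAbs_sq hx (mem_Icc.1 hi).1 (mem_Icc.1 hi).2)

lemma Gsum_spcard_le_add_dist (hg : Monotone g) (w : Evec n) :
    Gsum g (spcard x) ≤ Gsum g (spcard w) + ENNReal.ofReal (‖w - x‖ ^ 2) := by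
  set k := spcard x
  set j := spcard w
  rcases le_or_gt k j with hkj | hjk
  · exact (Gsum_mono g hkj).trans le_self_add
  rw [← Gsum_add_sum_Ioc g hjk.le]
  gcongr
  calc ∑ i ∈ Ioc j k, g i ≤ #(Ioc j k) • g k :=
        sum_le_card_nsmul _ _ _ fun i hi => hg (mem_Ioc.1 hi).2
    _ ≤ (k - j) • ENNReal.ofReal (sortedAbs x k ^ 2) := by
        rw [Nat.card_Ioc]
        gcongr
        exact le_ofReal_sortedAbs_sq hx (by omega) le_rfl
    _ = ENNReal.ofReal (((k - j : ℕ) : ℝ) * sortedAbs x k ^ 2) := by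
        rw [nsmul_eq_mul, ENNReal.ofReal_mul (by positivity), ENNReal.ofReal_natCast]
    _ ≤ _ := ENNReal.ofReal_le_ofReal (sub_spcard_mul_sortedAbs_sq_le w x k)

lemma fconj_two_smul_le (hg : Monotone g) :
    fconj g ((2 : ℝ) • x) ≤ ((‖x‖ ^ 2 - (Gsum g (spcard x)).toReal : ℝ) : EReal) := by
  refine iSup_le fun w => ?_
  rcases eq_or_ne (Gsum g (spcard w)) ⊤ with hw | hw
  · rw [fobj, hw, EReal.coe_ennreal_top, EReal.top_add_coe, EReal.sub_top]
    exact bot_le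
  rw [fobj_eq_coe g hw, ← EReal.coe_sub, EReal.coe_le_coe_iff, real_inner_smul_right]
  have hG := ENNReal.toReal_mono (ENNReal.add_ne_top.2 ⟨hw, ENNReal.ofReal_ne_top⟩)
    (Gsum_spcard_le_add_dist hx hg w)
  rw [ENNReal.toReal_add hw ENNReal.ofReal_ne_top, ENNReal.toReal_ofReal (by positivity)] at hG
  linarith [norm_sub_sq_real w x]

lemma fbiconj_eq_fobj (hg : Monotone g) : fbiconj g x = fobj g x := by
  refine le_antisymm (fbiconj_le_fobj g x) ?_
  calc fobj g x = ((⟪x, (2 : ℝ) • x⟫ : ℝ) : EReal)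
        - ((‖x‖ ^ 2 - (Gsum g (spcard x)).toReal : ℝ) : EReal) := by
        rw [fobj_eq_coe g (Gsum_spcard_ne_top hx), ← EReal.coe_sub, real_inner_smul_right,
          real_inner_self_eq_norm_sq]
        ring_nf
    _ ≤ ((⟪x, (2 : ℝ) • x⟫ : ℝ) : EReal) - fconj g ((2 : ℝ) • x) :=
        EReal.sub_le_sub le_rfl (fconj_two_smul_le hx hg)
    _ ≤ fbiconj g x := le_iSup (fun y : Evec n => ((⟪x, y⟫ : ℝ) : EReal) - fconj g y) _

lemma two_mul_sortedAbs_mul_sub_penalty_le (i : Fin n) (t : ℝ) :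
    2 * (sortedAbs x (i + 1) * t) - penalty (g (i + 1)) t ≤
      sortedAbs x (i + 1) ^ 2 + if (i : ℕ) < spcard x then (g (i + 1)).toReal else 0 := by
  split_ifs with hi
  · exact two_mul_sub_penalty_le (le_ofReal_sortedAbs_sq hx (by omega) hi)
  · rw [sortedAbs_eq_zero_of_spcard_lt x (by omega)]
    simp [penalty_nonneg]

lemma two_mul_sortedAbs_mul_sub_penalty_eq_iff (i : Fin n) {t : ℝ} (ht : 0 ≤ t) :
    2 * (sortedAbs x (i + 1) * t) - penalty (g (i + 1)) t =
        sortedAbs x (i + 1) ^ 2 + (if (i : ℕ) < spcard x then (g (i + 1)).toReal else 0) ↔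
      if (i : ℕ) < spcard x then t = sortedAbs x (i + 1)
      else ENNReal.ofReal t ≤ sqrtE (g (i + 1)) := by
  split_ifs with hi
  · exact two_mul_sub_penalty_eq_iff (le_ofReal_sortedAbs_sq hx (by omega) hi)
  · rw [sortedAbs_eq_zero_of_spcard_lt x (by omega), ← penalty_eq_zero_iff ht]
    simp

lemma Gsum_toReal_add_norm_sq_eq_sum :
    (Gsum g (spcard x)).toReal + ‖x‖ ^ 2 = ∑ i : Fin n,
      (sortedAbs x (i + 1) ^ 2 + if (i : ℕ) < spcard x then (g (i + 1)).toReal else 0) := by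
  have hfin (i : Fin n) : (if (i : ℕ) < spcard x then g (i + 1) else 0) ≠ ⊤ := by
    split_ifs with hi
    · exact ne_top_of_le_ne_top ENNReal.ofReal_ne_top (le_ofReal_sortedAbs_sq hx (by omega) hi)
    · exact ENNReal.zero_ne_top
  rw [sum_add_distrib, sum_sortedAbs_sq, add_comm, Gsum_eq_sum_fin g (spcard_le x),
    ENNReal.toReal_sum fun i _ => hfin i]
  simp only [apply_ite ENNReal.toReal, ENNReal.toReal_zero]

end NoSmallEntries

theorem maximizer_characterization_general
    {n : ℕ} (g : ℕ → ℝ≥0∞) (hgmono : Monotone g)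
    (x : Evec n) (k : ℕ) (hk : spcard x = k)
    (hx : ∀ i, ¬(0 < sortedAbs x i ∧ ENNReal.ofReal (sortedAbs x i) < sqrtE (g i)))
    (z : Fin n → ℝ) (hz1 : ∀ i j : Fin n, i ≤ j → z j ≤ z i) (hz2 : ∀ i, 0 ≤ z i) :
    ((((2 * ∑ i : Fin n, sortedAbs x ((i : ℕ) + 1) * z i
        - ∑ i : Fin n, if g ((i : ℕ) + 1) = ⊤ then (0 : ℝ)
            else max ((z i) ^ 2 - (g ((i : ℕ) + 1)).toReal) 0) : ℝ) : EReal)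
      = fbiconj g x)
    ↔ ((∀ i : Fin n, (i : ℕ) + 1 ≤ k → z i = sortedAbs x ((i : ℕ) + 1)) ∧
       (∀ i : Fin n, k < (i : ℕ) + 1 →
         ENNReal.ofReal (z i) ≤
           min (if k = 0 then (⊤ : ℝ≥0∞) else ENNReal.ofReal (sortedAbs x k))
               (if k = n then (⊤ : ℝ≥0∞) else sqrtE (g (k + 1))))) := by
  subst hk
  rw [fbiconj_eq_fobj hx hgmono, fobj_eq_coe g (Gsum_spcard_ne_top hx), EReal.coe_eq_coe_iff,
    Gsum_toReal_add_norm_sq_eq_sum hx, mul_sum, ← sum_sub_distrib]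
  refine (sum_eq_sum_iff_of_le fun i _ => two_mul_sortedAbs_mul_sub_penalty_le hx i (z i)).trans ?_
  refine Iff.trans ?_ (maximizer_conditions_iff (spcard_le x) (fun i j h => hz1 i j h) hgmono _)
  exact forall_congr' fun i =>
    (imp_iff_right (mem_univ i)).trans (two_mul_sortedAbs_mul_sub_penalty_eq_iff hx i (hz2 i))

/-- If `card(x) = k` and `x̃_i ∉ (0, √g_i)` for all `i`, then a
nonincreasing nonnegative `z̃` attains the supremum in the representation of `f**(x)`
iff `z̃_i = x̃_i` for `i ≤ k` and `z̃_i ∈ [0, min(x̃_k, √g_{k+1})]` for `i > k`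
(with `x̃_0 = +∞` when `k = 0` and `√g_{n+1} = +∞` when `k = n`). -/
theorem maximizer_characterization
    {n : ℕ} (g : ℕ → ℝ≥0∞) (hg0 : g 0 = 0) (hgmono : Monotone g)
    (x : Evec n) (k : ℕ) (hk : spcard x = k)
    (hx : ∀ i, ¬(0 < sortedAbs x i ∧ ENNReal.ofReal (sortedAbs x i) < sqrtE (g i)))
    (z : Fin n → ℝ) (hz1 : ∀ i j : Fin n, i ≤ j → z j ≤ z i) (hz2 : ∀ i, 0 ≤ z i) :
    ((((2 * ∑ i : Fin n, sortedAbs x ((i : ℕ) + 1) * z i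
        - ∑ i : Fin n, if g ((i : ℕ) + 1) = ⊤ then (0 : ℝ)
            else max ((z i) ^ 2 - (g ((i : ℕ) + 1)).toReal) 0) : ℝ) : EReal)
      = fbiconj g x)
    ↔ ((∀ i : Fin n, (i : ℕ) + 1 ≤ k → z i = sortedAbs x ((i : ℕ) + 1)) ∧
       (∀ i : Fin n, k < (i : ℕ) + 1 →
         ENNReal.ofReal (z i) ≤
           min (if k = 0 then (⊤ : ℝ≥0∞) else ENNReal.ofReal (sortedAbs x k))
               (if k = n then (⊤ : ℝ≥0∞) else sqrtE (g (k + 1))))) :=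
  maximizer_characterization_general g hgmono x k hk hx z hz1 hz2
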